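/- Let φ be a meromorphic function on ℂ satisfying φ(z+1) = (-1)^{2m}φ(z) and φ(z+τ) = (-1)^ε e^{-2πim(τ+2z)}φ(z) for some m ∈ (1/2)ℤ, ε ∈ {0,1}, τ ∈ ℍ, and let ℓ ∈ m + ℤ. If φ has no poles on the boundary of P_{z₀} := z₀ + [0,1)τ + [0,1), then ∫_{∂P_{z₀}} φ(v) θ⁺_{ℓ,ε,-m}(v;τ) dv = e^{-πiℓ²τ/(2m)} ∫_{z₀}^{z₀+1} φ(v) e^{-2πiℓv} dv, where the boundary contour is traversed counterclockwise. -/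

import Mathlib

/-!
Put `g v = φ v * θ⁺_{ℓ,ε,-m}(v)`. Since `2m ∈ ℤ` and `ℓ ∈ m + ℤ`, each term of the theta series
picks up the factor `e(-ℓ)` under `v ↦ v + 1`, which cancels the multiplier `e(m)` of `φ`; so `g` is
1-periodic and the two slanted edges of `∂P_{z₀}` cancel. Splitting off the `n = 0` term of the
series gives `θ⁺(z) - (-1)^ε q^M ζ^{2M} θ⁺(z + τ) = q^{ℓ²/(4M)} ζ^{-ℓ}` with `M = -m`, and together
with the `τ`-quasi-periodicity of `φ` this turns `g v - g (v + τ)` into a constant times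
`φ v e(-ℓ v)`: the bottom edge minus the top edge is the Fourier coefficient.
-/

noncomputable section
open Complex Filter Set intervalIntegral

/-- `e x = exp(2πix)` -/
def e (x : ℂ) : ℂ := Complex.exp (2 * Real.pi * Complex.I * x)

/-- Partial theta function `θ⁺_{ℓ,ε,M}(z;τ)`. -/
def ptheta (ℓ M : ℝ) (ε : ℕ) (z τ : ℂ) : ℂ :=
  ∑' n : ℕ, (-1 : ℂ) ^ (n * ε) * e (τ * ((2 * M * n - ℓ) ^ 2 / (4 * M)))
      * e (z * (2 * M * n - ℓ))

/-- Boundary of the parallelogram with vertices `z₀, z₀+1, z₀+τ, z₀+1+τ`. -/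
def parBoundary (z₀ τ : ℂ) : Set ℂ :=
  {z | ∃ t : ℝ, 0 ≤ t ∧ t ≤ 1 ∧
    (z = z₀ + t ∨ z = z₀ + τ + t ∨ z = z₀ + t * τ ∨ z = z₀ + 1 + t * τ)}

/-- The counterclockwise contour integral of `g` over `∂P_{z₀}`. -/
def parContourIntegral (g : ℂ → ℂ) (z₀ τ : ℂ) : ℂ :=
  (∫ t in (0 : ℝ)..1, g (z₀ + t)) + (∫ t in (0 : ℝ)..1, g (z₀ + 1 + t * τ) * τ)
    - (∫ t in (0 : ℝ)..1, g (z₀ + τ + t)) - (∫ t in (0 : ℝ)..1, g (z₀ + t * τ) * τ)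

lemma e_add (x y : ℂ) : e (x + y) = e x * e y := by
  rw [e, e, e, mul_add, Complex.exp_add]

lemma e_intCast (n : ℤ) : e n = 1 := by
  rw [e, show 2 * (Real.pi : ℂ) * Complex.I * n = n * (2 * Real.pi * Complex.I) by ring,
    Complex.exp_int_mul_two_pi_mul_I]

lemma norm_e (w : ℂ) : ‖e w‖ = Real.exp (-(2 * Real.pi * w.im)) := by
  rw [e, Complex.norm_exp]
  congr 1
  simp [Complex.mul_re, Complex.mul_im]

lemma parContourIntegral_eq_of_periodic {g h : ℂ → ℂ} {z₀ τ C : ℂ}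
    (hg1 : Function.Periodic g 1) (hgτ : ∀ v, g v - g (v + τ) = C * h v)
    (hbot : IntervalIntegrable (fun t : ℝ => g (z₀ + t)) MeasureTheory.volume 0 1)
    (htop : IntervalIntegrable (fun t : ℝ => g (z₀ + τ + t)) MeasureTheory.volume 0 1) :
    parContourIntegral g z₀ τ = C * ∫ t in (0 : ℝ)..1, h (z₀ + t) := by
  have hvert : (∫ t in (0 : ℝ)..1, g (z₀ + 1 + t * τ) * τ)
      = ∫ t in (0 : ℝ)..1, g (z₀ + t * τ) * τ :=
    integral_congr fun t _ => by
      simp only [show z₀ + 1 + (t : ℂ) * τ = z₀ + t * τ + 1 by ring, hg1 (z₀ + t * τ)]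
  have hhor : (∫ t in (0 : ℝ)..1, g (z₀ + t)) - ∫ t in (0 : ℝ)..1, g (z₀ + τ + t)
      = ∫ t in (0 : ℝ)..1, C * h (z₀ + t) := by
    rw [← integral_sub hbot htop]
    exact integral_congr fun t _ => by
      simp only [show z₀ + τ + (t : ℂ) = z₀ + t + τ by ring, hgτ]
  rw [parContourIntegral, hvert, ← integral_const_mul, ← hhor]
  ring

lemma intervalIntegrable_mul_of_continuousAt {φ : ℂ → ℂ} {ψ : ℝ → ℂ} {z : ℂ}
    (hφ : ∀ t ∈ Icc (0 : ℝ) 1, ContinuousAt φ (z + t)) (hψ : Continuous ψ) :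
    IntervalIntegrable (fun t : ℝ => φ (z + t) * ψ t) MeasureTheory.volume 0 1 := by
  refine ContinuousOn.intervalIntegrable fun t ht => ContinuousAt.continuousWithinAt ?_
  rw [uIcc_of_le zero_le_one] at ht
  exact ((hφ t ht).comp (f := fun s : ℝ => z + s) (by fun_prop)).mul hψ.continuousAt

section PartialTheta

variable (ℓ M : ℝ) (ε : ℕ) (τ : ℂ)

def pthetaTerm (z : ℂ) (n : ℕ) : ℂ :=
  (-1 : ℂ) ^ (n * ε) * e (τ * ((2 * M * n - ℓ) ^ 2 / (4 * M))) * e (z * (2 * M * n - ℓ))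

lemma ptheta_eq_tsum_pthetaTerm (z : ℂ) : ptheta ℓ M ε z τ = ∑' n, pthetaTerm ℓ M ε τ z n := rfl

lemma pthetaTerm_eq_jacobiTheta₂_term (hM : M ≠ 0) (z : ℂ) (n : ℕ) :
    pthetaTerm ℓ M ε τ z n = e (τ * (ℓ ^ 2 / (4 * M)) - z * ℓ)
      * jacobiTheta₂_term n (ε / 2 + 2 * M * z - ℓ * τ) (2 * M * τ) := by
  have hM0 : (M : ℂ) ≠ 0 := Complex.ofReal_ne_zero.mpr hM
  rw [pthetaTerm, jacobiTheta₂_term, e, e, e, ← Complex.exp_pi_mul_I,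
    ← Complex.exp_nat_mul, ← Complex.exp_add, ← Complex.exp_add, ← Complex.exp_add]
  congr 1
  push_cast
  field_simp
  ring

lemma summable_pthetaTerm (hM : 0 < M) (hτ : 0 < τ.im) (z : ℂ) :
    Summable (pthetaTerm ℓ M ε τ z) := by
  have hθ : Summable (jacobiTheta₂_term · (ε / 2 + 2 * M * z - ℓ * τ) (2 * M * τ)) :=
    (summable_jacobiTheta₂_term_iff _ _).mpr (by simpa [Complex.mul_im] using by positivity)
  have hθℕ := (hθ.mul_left (e (τ * (ℓ ^ 2 / (4 * M)) - z * ℓ))).comp_injective Int.ofNat_injective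
  exact hθℕ.congr fun n => (pthetaTerm_eq_jacobiTheta₂_term ℓ M ε τ hM.ne' z n).symm

lemma norm_pthetaTerm_add_ofReal (z : ℂ) (t : ℝ) (n : ℕ) :
    ‖pthetaTerm ℓ M ε τ (z + t) n‖ = ‖pthetaTerm ℓ M ε τ z n‖ := by
  have hreal : ∀ w : ℂ, w * (2 * M * n - ℓ) = w * ((2 * M * n - ℓ : ℝ) : ℂ) := by
    intro w; push_cast; ring
  rw [pthetaTerm, pthetaTerm, hreal (z + t), hreal z]
  simp only [norm_mul, norm_pow, norm_neg, norm_one, one_pow, norm_e]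
  simp [Complex.mul_im]

lemma continuous_ptheta_add_ofReal (hM : 0 < M) (hτ : 0 < τ.im) (z : ℂ) :
    Continuous fun t : ℝ => ptheta ℓ M ε (z + t) τ := by
  simp only [ptheta_eq_tsum_pthetaTerm]
  refine continuous_tsum (fun n => ?_) (summable_pthetaTerm ℓ M ε τ hM hτ z).norm
    fun n t => (norm_pthetaTerm_add_ofReal ℓ M ε τ z t n).le
  unfold pthetaTerm e
  fun_prop

lemma pthetaTerm_zero (z : ℂ) :
    pthetaTerm ℓ M ε τ z 0 = e (τ * (ℓ ^ 2 / (4 * M))) * e (-(ℓ * z)) := by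
  simp only [pthetaTerm, zero_mul, pow_zero, one_mul, Nat.cast_zero, mul_zero, zero_sub,
    neg_sq, neg_mul, mul_comm z]

lemma pthetaTerm_succ (hM : M ≠ 0) (z : ℂ) (n : ℕ) :
    pthetaTerm ℓ M ε τ z (n + 1)
      = (-1 : ℂ) ^ ε * e (M * (τ + 2 * z)) * pthetaTerm ℓ M ε τ (z + τ) n := by
  have hM0 : (M : ℂ) ≠ 0 := Complex.ofReal_ne_zero.mpr hM
  have hexp : e (τ * ((2 * M * (n + 1 : ℕ) - ℓ) ^ 2 / (4 * M)) + z * (2 * M * (n + 1 : ℕ) - ℓ))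
      = e (M * (τ + 2 * z)
          + (τ * ((2 * M * n - ℓ) ^ 2 / (4 * M)) + (z + τ) * (2 * M * n - ℓ))) := by
    congr 1
    push_cast
    field_simp
    ring
  simp only [e_add] at hexp
  rw [pthetaTerm, pthetaTerm, add_mul, one_mul, pow_add, mul_assoc _ (e _), hexp]
  ring

lemma ptheta_sub_mul_ptheta_add (hM : 0 < M) (hτ : 0 < τ.im) (z : ℂ) :
    ptheta ℓ M ε z τ - (-1 : ℂ) ^ ε * e (M * (τ + 2 * z)) * ptheta ℓ M ε (z + τ) τ
      = e (τ * (ℓ ^ 2 / (4 * M))) * e (-(ℓ * z)) := by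
  rw [ptheta_eq_tsum_pthetaTerm, (summable_pthetaTerm ℓ M ε τ hM hτ z).tsum_eq_zero_add,
    tsum_congr (pthetaTerm_succ ℓ M ε τ hM.ne' z), tsum_mul_left, ← ptheta_eq_tsum_pthetaTerm,
    pthetaTerm_zero]
  ring

lemma ptheta_add_one {k : ℤ} (hk : 2 * M = k) (z : ℂ) :
    ptheta ℓ M ε (z + 1) τ = e (-ℓ) * ptheta ℓ M ε z τ := by
  rw [ptheta_eq_tsum_pthetaTerm, ptheta_eq_tsum_pthetaTerm, ← tsum_mul_left]
  refine tsum_congr fun n => ?_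
  have hshift : (z + 1) * (2 * M * n - ℓ) = ((k * n : ℤ) : ℂ) + (-ℓ + z * (2 * M * n - ℓ)) := by
    have hkC : (k : ℂ) = 2 * M := by exact_mod_cast hk.symm
    push_cast [hkC]
    ring
  rw [pthetaTerm, pthetaTerm, hshift, e_add, e_intCast, one_mul, e_add]
  ring

end PartialTheta

section QuasiPeriodic

variable {φ : ℂ → ℂ} {m ℓ : ℝ} {ε : ℕ} {τ : ℂ}

lemma periodic_mul_ptheta {k j : ℤ} (hk : 2 * m = k) (hj : ℓ = m + j)
    (hper1 : ∀ z : ℂ, φ (z + 1) = Complex.exp (Real.pi * Complex.I * (2 * m)) * φ z) :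
    Function.Periodic (fun v => φ v * ptheta ℓ (-m) ε v τ) 1 := by
  intro v
  have hfactor : Complex.exp (Real.pi * Complex.I * (2 * m)) * e (-ℓ) = 1 := by
    rw [show Complex.exp (Real.pi * Complex.I * (2 * m)) = e m by rw [e]; ring_nf,
      ← e_add, show (m : ℂ) + -ℓ = ((-j : ℤ) : ℂ) by push_cast [hj]; ring, e_intCast]
  simp only [hper1, ptheta_add_one ℓ (-m) ε τ (k := -k) (by push_cast [← hk]; ring)]
  linear_combination (φ v * ptheta ℓ (-m) ε v τ) * hfactor

lemma mul_ptheta_sub_mul_ptheta_add (hm : m < 0) (hτ : 0 < τ.im)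
    (hperτ : ∀ z : ℂ, φ (z + τ)
      = (-1 : ℂ) ^ ε * Complex.exp (-2 * Real.pi * Complex.I * m * (τ + 2 * z)) * φ z)
    (v : ℂ) :
    φ v * ptheta ℓ (-m) ε v τ - φ (v + τ) * ptheta ℓ (-m) ε (v + τ) τ
      = Complex.exp (-Real.pi * Complex.I * ℓ ^ 2 * τ / (2 * m)) * (φ v * e (-(ℓ * v))) := by
  have hm0 : (m : ℂ) ≠ 0 := Complex.ofReal_ne_zero.mpr hm.ne
  have hfactor : Complex.exp (-2 * Real.pi * Complex.I * m * (τ + 2 * v))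
      = e ((-m : ℝ) * (τ + 2 * v)) := by
    rw [e]; congr 1; push_cast; ring
  have hconst : Complex.exp (-Real.pi * Complex.I * ℓ ^ 2 * τ / (2 * m))
      = e (τ * (ℓ ^ 2 / (4 * (-m : ℝ)))) := by
    rw [e]; congr 1; push_cast; field_simp; ring
  have hstep := ptheta_sub_mul_ptheta_add ℓ (-m) ε τ (neg_pos.mpr hm) hτ v
  rw [hperτ, hfactor, hconst]
  linear_combination φ v * hstep

end QuasiPeriodic

theorem contour_integral_eq_fourier_coefficient_general
    (τ : ℂ) (hτ : 0 < τ.im)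
    (m : ℝ) (hm : ∃ k : ℕ, 0 < k ∧ m = -((k : ℝ) / 2))
    (ε : ℕ)
    (φ : ℂ → ℂ)
    (hper1 : ∀ z : ℂ, φ (z + 1) = Complex.exp (Real.pi * Complex.I * (2 * m)) * φ z)
    (hperτ : ∀ z : ℂ, φ (z + τ)
      = (-1 : ℂ) ^ ε * Complex.exp (-2 * Real.pi * Complex.I * m * (τ + 2 * z)) * φ z)
    (ℓ : ℝ) (hℓ : ∃ k : ℤ, ℓ = m + (k : ℝ))
    (z₀ : ℂ)
    -- `φ` has no poles on `∂P_{z₀}`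
    (hbd : ∀ z ∈ parBoundary z₀ τ, DifferentiableAt ℂ φ z) :
    parContourIntegral (fun v => φ v * ptheta ℓ (-m) ε v τ) z₀ τ
      = Complex.exp (-Real.pi * Complex.I * ℓ ^ 2 * τ / (2 * m))
          * ∫ t in (0 : ℝ)..1, φ (z₀ + t) * e (-(ℓ * (z₀ + t))) := by
  obtain ⟨k, hk, hmk⟩ := hm
  obtain ⟨j, hj⟩ := hℓ
  have hk_pos : (0 : ℝ) < k := by exact_mod_cast hk
  have hm_neg : m < 0 := by rw [hmk]; linarith
  have h2m : 2 * m = ((-k : ℤ) : ℝ) := by rw [hmk]; push_cast; ring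
  have hθ := continuous_ptheta_add_ofReal ℓ (-m) ε τ (neg_pos.mpr hm_neg) hτ
  exact parContourIntegral_eq_of_periodic (periodic_mul_ptheta h2m hj hper1)
    (mul_ptheta_sub_mul_ptheta_add hm_neg hτ hperτ)
    (intervalIntegrable_mul_of_continuousAt
      (fun t ht => (hbd _ ⟨t, ht.1, ht.2, Or.inl rfl⟩).continuousAt) (hθ z₀))
    (intervalIntegrable_mul_of_continuousAt
      (fun t ht => (hbd _ ⟨t, ht.1, ht.2, Or.inr (Or.inl rfl)⟩).continuousAt) (hθ (z₀ + τ)))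

theorem contour_integral_eq_fourier_coefficient
    (τ : ℂ) (hτ : 0 < τ.im)
    (m : ℝ) (hm : ∃ k : ℕ, 0 < k ∧ m = -((k : ℝ) / 2))
    (ε : ℕ) (hε : ε = 0 ∨ ε = 1)
    (φ : ℂ → ℂ) (hmero : MeromorphicOn φ Set.univ)
    (hper1 : ∀ z : ℂ, φ (z + 1) = Complex.exp (Real.pi * Complex.I * (2 * m)) * φ z)
    (hperτ : ∀ z : ℂ, φ (z + τ)
      = (-1 : ℂ) ^ ε * Complex.exp (-2 * Real.pi * Complex.I * m * (τ + 2 * z)) * φ z)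
    (ℓ : ℝ) (hℓ : ∃ k : ℤ, ℓ = m + (k : ℝ))
    (z₀ : ℂ)
    -- `φ` has no poles on `∂P_{z₀}`
    (hbd : ∀ z ∈ parBoundary z₀ τ, DifferentiableAt ℂ φ z) :
    parContourIntegral (fun v => φ v * ptheta ℓ (-m) ε v τ) z₀ τ
      = Complex.exp (-Real.pi * Complex.I * ℓ ^ 2 * τ / (2 * m))
          * ∫ t in (0 : ℝ)..1, φ (z₀ + t) * e (-(ℓ * (z₀ + t))) :=
  contour_integral_eq_fourier_coefficient_general τ hτ m hm ε φ hper1 hperτ ℓ hℓ z₀ hbd
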